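/- On M_4(ℂ) ≅ M_2(ℂ) ⊗ M_2(ℂ), let D = Σ_{i=1}^3 D_{L_i} with jump operators L_1 = (σᶻ + 2σ⁻) ⊗ I, L_2 = |1⟩⟨1| ⊗ σ⁻, L_3 = |1⟩⟨1| ⊗ σ⁺. Then: (a) a matrix X ∈ M_4(ℂ) satisfies D(X) = 0 if and only if X = α·([[6, −2], [−2, 1]] ⊗ I) for some α ∈ ℂ; in particular σ_∞ = (1/14)·[[6, −2], [−2, 1]] ⊗ I is the unique density matrix annihilated by D. (b) For the Lindbladian L = −i[σʸ ⊗ I, ·] + D, one has L(|0⟩⟨0| ⊗ M) = 0 for every M ∈ M_2(ℂ); consequently L has more than one fixed density matrix and does not generate exponentially contractive dynamics. -/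

import Mathlib

/-! The kernel of `D` is computed entrywise: `D(X) = 0` is a rank-15 linear system in the
16 entries of `X`.

For the driven Lindbladian, the jumps `|1⟩⟨1| ⊗ σ^∓` annihilate `|0⟩⟨0| ⊗ M` from both sides,
so on this sector only the first qubit evolves, and there
`-i[σʸ, |0⟩⟨0|] + D_{σᶻ + 2σ⁻}(|0⟩⟨0|) = 0`. Hence every `|0⟩⟨0| ⊗ ρ` is stationary, and two
distinct stationary states keep a positive trace distance forever, which no exponentially
decaying bound allows. -/

open scoped ComplexOrder Kronecker
open Matrix

namespace Paper

variable {n : Type*} [Fintype n] [DecidableEq n]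

/-- Trace norm: sum of singular values. -/
noncomputable def traceNorm (A : Matrix n n ℂ) : ℝ :=
  ∑ i, Real.sqrt ((Matrix.posSemidef_conjTranspose_mul_self A).isHermitian.eigenvalues i)

/-- The dissipator associated with a single jump operator. -/
noncomputable def dissipator (L x : Matrix n n ℂ) : Matrix n n ℂ :=
  L * x * Lᴴ - ((1 : ℂ)/2) • (Lᴴ * L * x + x * (Lᴴ * L))

/-- Total dissipator of a family of jump operators. -/
noncomputable def totalDissipator {m : ℕ} (L : Fin m → Matrix n n ℂ) (x : Matrix n n ℂ) :
    Matrix n n ℂ :=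
  ∑ j, dissipator (L j) x

/-- The Hamiltonian commutator term `-i[H, x]`. -/
noncomputable def hamTerm (H x : Matrix n n ℂ) : Matrix n n ℂ :=
  (-Complex.I) • (H * x - x * H)

/-- A solution of the master equation `ρ' = L_t(ρ)` starting at time `s`
(differentiable entrywise). -/
def IsSolution (Lt : ℝ → Matrix n n ℂ → Matrix n n ℂ) (s : ℝ) (ρ : ℝ → Matrix n n ℂ) : Prop :=
  ∀ t, s ≤ t → ∀ i j, HasDerivAt (fun u => ρ u i j) ((Lt t (ρ t)) i j) t

/-- Density matrix: Hermitian, positive semidefinite, trace one. -/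
def IsDensity (ρ : Matrix n n ℂ) : Prop := ρ.PosSemidef ∧ ρ.trace = 1

/-- Exponential contractivity with constants `K, γ` of a time-dependent Lindbladian. -/
def ExpContractiveWith (Lt : ℝ → Matrix n n ℂ → Matrix n n ℂ) (K γ : ℝ) : Prop :=
  ∀ s t : ℝ, 0 ≤ s → s ≤ t → ∀ ρ σ : ℝ → Matrix n n ℂ,
    IsSolution Lt s ρ → IsSolution Lt s σ → IsDensity (ρ s) → IsDensity (σ s) →
    traceNorm (ρ t - σ t) ≤ K * Real.exp (-γ * (t - s)) * traceNorm (ρ s - σ s)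

/-- Exponential contractivity of a time-dependent Lindbladian. -/
def ExpContractive (Lt : ℝ → Matrix n n ℂ → Matrix n n ℂ) : Prop :=
  ∃ K γ : ℝ, 0 < K ∧ 0 < γ ∧ ExpContractiveWith Lt K γ

/-- Time-dependent Hamiltonian: Hermitian values and continuous entries. -/
def IsHamiltonianFamily (H : ℝ → Matrix n n ℂ) : Prop :=
  (∀ t, (H t).IsHermitian) ∧ ∀ i j, Continuous fun t => H t i j

/-- Driven Lindbladian `x ↦ -i[H(t), x] + D(x)`. -/
noncomputable def driven {m : ℕ} (H : ℝ → Matrix n n ℂ) (L : Fin m → Matrix n n ℂ)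
    (t : ℝ) (x : Matrix n n ℂ) : Matrix n n ℂ :=
  hamTerm (H t) x + totalDissipator L x

/-- Hamiltonian-independent contractivity of a dissipator. -/
def HamIndepContractive {m : ℕ} (L : Fin m → Matrix n n ℂ) : Prop :=
  ∀ H : ℝ → Matrix n n ℂ, IsHamiltonianFamily H → ExpContractive (driven H L)

/-- The operator norm (largest singular value). -/
noncomputable def opNorm (A : Matrix n n ℂ) : ℝ :=
  ‖LinearMap.toContinuousLinearMap (Matrix.toEuclideanLin A)‖

end Paper

namespace Paper

/-- a constant Lindbladian generates exponentially contractive dynamics. -/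
def GeneratesExpContractive {n : Type*} [Fintype n] [DecidableEq n]
    (Lop : Matrix n n ℂ → Matrix n n ℂ) : Prop :=
  ∃ K γ : ℝ, 0 < K ∧ 0 < γ ∧
    ∀ ρ σ : ℝ → Matrix n n ℂ,
      IsSolution (fun _ => Lop) 0 ρ → IsSolution (fun _ => Lop) 0 σ →
      IsDensity (ρ 0) → IsDensity (σ 0) →
      ∀ t : ℝ, 0 ≤ t →
        traceNorm (ρ t - σ t) ≤ K * Real.exp (-γ * t) * traceNorm (ρ 0 - σ 0)

open Filter Topology

section General

variable {n : Type*}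

theorem isSolution_const {Lt : ℝ → Matrix n n ℂ → Matrix n n ℂ} {s : ℝ} {A : Matrix n n ℂ}
    (hA : ∀ t, s ≤ t → Lt t A = 0) : IsSolution Lt s fun _ => A := fun t ht i j => by
  simpa [hA t ht] using hasDerivAt_const t (A i j)

variable [Fintype n]

theorem dissipator_smul (L X : Matrix n n ℂ) (c : ℂ) :
    dissipator L (c • X) = c • dissipator L X := by
  simp only [dissipator, Matrix.mul_smul, Matrix.smul_mul, ← smul_add, smul_sub, smul_comm c]

theorem totalDissipator_smul {m : ℕ} (L : Fin m → Matrix n n ℂ) (X : Matrix n n ℂ) (c : ℂ) :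
    totalDissipator L (c • X) = c • totalDissipator L X := by
  simp only [totalDissipator, dissipator_smul, Finset.smul_sum]

theorem IsDensity.kronecker {m : Type*} [Fintype m] {A : Matrix n n ℂ} {B : Matrix m m ℂ}
    (hA : IsDensity A) (hB : IsDensity B) : IsDensity (A ⊗ₖ B) :=
  ⟨hA.1.kronecker hB.1, by rw [trace_kronecker, hA.2, hB.2, one_mul]⟩

variable [DecidableEq n]

theorem traceNorm_pos {A : Matrix n n ℂ} (hA : A ≠ 0) : 0 < traceNorm A := by
  have hP := posSemidef_conjTranspose_mul_self A
  refine (Finset.sum_nonneg fun i _ => Real.sqrt_nonneg _).lt_of_ne fun h => hA ?_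
  rw [eq_comm, Finset.sum_eq_zero_iff_of_nonneg fun i _ => Real.sqrt_nonneg _] at h
  rw [← conjTranspose_mul_self_eq_zero, ← hP.isHermitian.eigenvalues_eq_zero_iff]
  funext i
  simpa [Real.sqrt_eq_zero (hP.eigenvalues_nonneg i)] using h i (Finset.mem_univ i)

theorem not_generatesExpContractive_of_fixed_densities {Lop : Matrix n n ℂ → Matrix n n ℂ}
    {σ₁ σ₂ : Matrix n n ℂ} (hne : σ₁ ≠ σ₂) (hσ₁ : IsDensity σ₁) (hσ₂ : IsDensity σ₂)
    (hfix₁ : Lop σ₁ = 0) (hfix₂ : Lop σ₂ = 0) : ¬ GeneratesExpContractive Lop := by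
  rintro ⟨K, γ, -, hγ, hcontr⟩
  have hdecay : Tendsto (fun t => K * Real.exp (-γ * t)) atTop (𝓝 0) := by
    simpa [neg_mul] using
      (Real.tendsto_exp_neg_atTop_nhds_zero.comp (tendsto_id.const_mul_atTop hγ)).const_mul K
  obtain ⟨t, hlt, ht⟩ :=
    ((hdecay.eventually (gt_mem_nhds one_pos)).and (eventually_ge_atTop 0)).exists
  have hdist : 0 < traceNorm (σ₁ - σ₂) := traceNorm_pos (sub_ne_zero.mpr hne)
  have hbound := hcontr (fun _ => σ₁) (fun _ => σ₂) (isSolution_const fun _ _ => hfix₁)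
    (isSolution_const fun _ _ => hfix₂) hσ₁ hσ₂ t ht
  nlinarith

end General

section Kronecker

theorem sub_kronecker {α l m p q : Type*} [Ring α] (A B : Matrix l m α) (C : Matrix p q α) :
    (A - B) ⊗ₖ C = A ⊗ₖ C - B ⊗ₖ C := by
  ext
  simp [sub_mul]

variable {l m : Type*} [Fintype l] [Fintype m]

theorem hamTerm_kronecker_one [DecidableEq m] (H X : Matrix l l ℂ) (M : Matrix m m ℂ) :
    hamTerm (H ⊗ₖ 1) (X ⊗ₖ M) = hamTerm H X ⊗ₖ M := by
  simp only [hamTerm, ← mul_kronecker_mul, one_mul, mul_one, ← sub_kronecker, smul_kronecker]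

theorem dissipator_kronecker_one [DecidableEq m] (A X : Matrix l l ℂ) (M : Matrix m m ℂ) :
    dissipator (A ⊗ₖ 1) (X ⊗ₖ M) = dissipator A X ⊗ₖ M := by
  simp only [dissipator, conjTranspose_kronecker, conjTranspose_one, ← mul_kronecker_mul,
    one_mul, mul_one, ← add_kronecker]
  rw [← smul_kronecker, ← sub_kronecker]

theorem dissipator_kronecker_eq_zero {P X : Matrix l l ℂ} (hPX : P * X = 0) (hXP : X * Pᴴ = 0)
    (S M : Matrix m m ℂ) : dissipator (P ⊗ₖ S) (X ⊗ₖ M) = 0 := by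
  simp only [dissipator, conjTranspose_kronecker, ← mul_kronecker_mul, Matrix.mul_assoc, hPX,
    ← Matrix.mul_assoc X, hXP]
  simp

end Kronecker

section TwoQubit

local notation "σʸ" => (!![0, -Complex.I; Complex.I, 0] : Matrix (Fin 2) (Fin 2) ℂ)
local notation "σᶻ" => (!![1, 0; 0, -1] : Matrix (Fin 2) (Fin 2) ℂ)
local notation "σ⁻" => (!![0, 1; 0, 0] : Matrix (Fin 2) (Fin 2) ℂ)
local notation "σ⁺" => (!![0, 0; 1, 0] : Matrix (Fin 2) (Fin 2) ℂ)
local notation "|0⟩⟨0|" => (!![1, 0; 0, 0] : Matrix (Fin 2) (Fin 2) ℂ)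
local notation "|1⟩⟨1|" => (!![0, 0; 0, 1] : Matrix (Fin 2) (Fin 2) ℂ)

def twoQubitJumps : Fin 3 → Matrix (Fin 2 × Fin 2) (Fin 2 × Fin 2) ℂ :=
  ![(σᶻ + (2 : ℂ) • σ⁻) ⊗ₖ 1, |1⟩⟨1| ⊗ₖ σ⁻, |1⟩⟨1| ⊗ₖ σ⁺]

def stationaryFactor : Matrix (Fin 2) (Fin 2) ℂ := !![6, -2; -2, 1]

theorem totalDissipator_twoQubitJumps_stationaryFactor :
    totalDissipator twoQubitJumps (stationaryFactor ⊗ₖ 1) = 0 := by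
  ext ⟨a, b⟩ ⟨c, d⟩
  fin_cases a <;> fin_cases b <;> fin_cases c <;> fin_cases d <;>
    simp [totalDissipator, dissipator, twoQubitJumps, stationaryFactor, Fin.sum_univ_three,
      mul_apply, Fintype.sum_prod_type, Fin.sum_univ_two, kroneckerMap_apply,
      conjTranspose_apply, one_apply, map_ofNat] <;> ring

theorem totalDissipator_twoQubitJumps_eq_zero_iff
    (X : Matrix (Fin 2 × Fin 2) (Fin 2 × Fin 2) ℂ) :
    totalDissipator twoQubitJumps X = 0 ↔ ∃ α : ℂ, X = α • (stationaryFactor ⊗ₖ 1) := by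
  constructor
  · intro hD
    rw [← Matrix.ext_iff] at hD
    simp [Prod.forall, Fin.forall_fin_two, totalDissipator, dissipator, twoQubitJumps,
      Fin.sum_univ_three, mul_apply, Fintype.sum_prod_type, Fin.sum_univ_two, kroneckerMap_apply,
      conjTranspose_apply, one_apply, map_ofNat] at hD
    obtain ⟨⟨⟨⟨h0, h1⟩, h2, h3⟩, ⟨h4, h5⟩, h6, h7⟩, ⟨⟨h8, h9⟩, h10, h11⟩, ⟨h12, h13⟩, h14, -⟩ := hD
    refine ⟨X (1, 1) (1, 1), ?_⟩
    ext ⟨a, b⟩ ⟨c, d⟩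
    -- each certificate writes an entry of `X - X (1, 1) (1, 1) • (stationaryFactor ⊗ₖ 1)`
    -- as a linear combination of entries of `D(X)`
    fin_cases a <;> fin_cases b <;> fin_cases c <;> fin_cases d <;>
      simp only [stationaryFactor, Matrix.smul_apply, kroneckerMap_apply, of_apply, cons_val',
        cons_val_zero, cons_val_one, cons_val_fin_one, one_apply, Fin.zero_eta, Fin.mk_one,
        Fin.isValue, zero_ne_one, one_ne_zero, ↓reduceIte, smul_eq_mul]
    · linear_combination (-33/4 : ℂ) * h0 + (-1/2 : ℂ) * h2 + (-1/2 : ℂ) * h8 + (-6 : ℂ) * h10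
    · linear_combination (-33/4 : ℂ) * h1 + (-1/2 : ℂ) * h3 + (-1/2 : ℂ) * h9 + (-6 : ℂ) * h11
    · linear_combination (5/2 : ℂ) * h0 + (-1/9 : ℂ) * h2 + (1/9 : ℂ) * h8 + (2 : ℂ) * h10
    · linear_combination (5/2 : ℂ) * h1 + (-1/9 : ℂ) * h3 + (1/9 : ℂ) * h9 + (2 : ℂ) * h11
    · linear_combination (-33/4 : ℂ) * h4 + (-1/2 : ℂ) * h6 + (-1/2 : ℂ) * h12 + (-6 : ℂ) * h14
    · linear_combination (-9/4 : ℂ) * h5 + (-1/2 : ℂ) * h7 + (-1/2 : ℂ) * h13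
    · linear_combination (5/2 : ℂ) * h4 + (-1/9 : ℂ) * h6 + (1/9 : ℂ) * h12 + (2 : ℂ) * h14
    · linear_combination (1/2 : ℂ) * h5 + (-1/9 : ℂ) * h7 + (1/9 : ℂ) * h13
    · linear_combination (5/2 : ℂ) * h0 + (1/9 : ℂ) * h2 + (-1/9 : ℂ) * h8 + (2 : ℂ) * h10
    · linear_combination (5/2 : ℂ) * h1 + (1/9 : ℂ) * h3 + (-1/9 : ℂ) * h9 + (2 : ℂ) * h11
    · linear_combination (-1 : ℂ) * h0 + (-1 : ℂ) * h10
    · linear_combination (-1 : ℂ) * h1 + (-1 : ℂ) * h11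
    · linear_combination (5/2 : ℂ) * h4 + (1/9 : ℂ) * h6 + (-1/9 : ℂ) * h12 + (2 : ℂ) * h14
    · linear_combination (1/2 : ℂ) * h5 + (1/9 : ℂ) * h7 + (-1/9 : ℂ) * h13
    · linear_combination (-1 : ℂ) * h4 + (-1 : ℂ) * h14
    · ring
  · rintro ⟨α, rfl⟩
    rw [totalDissipator_smul, totalDissipator_twoQubitJumps_stationaryFactor, smul_zero]

theorem stationaryFactor_posSemidef : stationaryFactor.PosSemidef := by
  have hGram : stationaryFactor = (!![2, -1; 1, 0; 1, 0] : Matrix (Fin 3) (Fin 2) ℂ)ᴴ *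
      (!![2, -1; 1, 0; 1, 0] : Matrix (Fin 3) (Fin 2) ℂ) := by
    ext i j
    fin_cases i <;> fin_cases j <;>
      simp [stationaryFactor, mul_apply, Fin.sum_univ_three, map_ofNat]
    norm_num
  rw [hGram]
  exact posSemidef_conjTranspose_mul_self _

theorem trace_stationaryFactor_kronecker_one :
    (stationaryFactor ⊗ₖ (1 : Matrix (Fin 2) (Fin 2) ℂ)).trace = 14 := by
  rw [trace_kronecker, trace_one]
  norm_num [stationaryFactor, trace_fin_two]

theorem isDensity_stationaryState :
    IsDensity (((1 : ℂ) / 14) • (stationaryFactor ⊗ₖ (1 : Matrix (Fin 2) (Fin 2) ℂ))) :=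
  ⟨(stationaryFactor_posSemidef.kronecker .one).smul (by rw [Complex.le_def]; norm_num),
    by rw [trace_smul, trace_stationaryFactor_kronecker_one]; norm_num⟩

theorem eq_stationaryState_of_isDensity {σ : Matrix (Fin 2 × Fin 2) (Fin 2 × Fin 2) ℂ}
    (hσ : IsDensity σ) (hfix : totalDissipator twoQubitJumps σ = 0) :
    σ = ((1 : ℂ) / 14) • (stationaryFactor ⊗ₖ 1) := by
  obtain ⟨α, rfl⟩ := (totalDissipator_twoQubitJumps_eq_zero_iff σ).mp hfix
  have htrace := hσ.2
  rw [trace_smul, trace_stationaryFactor_kronecker_one, smul_eq_mul] at htrace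
  rw [show α = 1 / 14 by linear_combination htrace / 14]

theorem isDensity_proj0 : IsDensity |0⟩⟨0| := by
  refine ⟨?_, by simp [trace_fin_two]⟩
  rw [show |0⟩⟨0| = diagonal ![1, 0] by ext i j; fin_cases i <;> fin_cases j <;> rfl]
  simp [Fin.forall_fin_two]

theorem isDensity_proj1 : IsDensity |1⟩⟨1| := by
  refine ⟨?_, by simp [trace_fin_two]⟩
  rw [show |1⟩⟨1| = diagonal ![0, 1] by ext i j; fin_cases i <;> fin_cases j <;> rfl]
  simp [Fin.forall_fin_two]

theorem hamTerm_add_dissipator_proj0 :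
    hamTerm σʸ |0⟩⟨0| + dissipator (σᶻ + (2 : ℂ) • σ⁻) |0⟩⟨0| = 0 := by
  ext i j
  fin_cases i <;> fin_cases j <;>
    norm_num [hamTerm, dissipator, vecMul, dotProduct, Fin.sum_univ_two, mul_apply, map_ofNat]

theorem hamTerm_add_totalDissipator_proj0_kronecker (M : Matrix (Fin 2) (Fin 2) ℂ) :
    hamTerm (σʸ ⊗ₖ 1) (|0⟩⟨0| ⊗ₖ M) + totalDissipator twoQubitJumps (|0⟩⟨0| ⊗ₖ M) = 0 := by
  have hP : |1⟩⟨1| * |0⟩⟨0| = 0 := by ext i j; fin_cases i <;> fin_cases j <;> simp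
  have hP' : |0⟩⟨0| * |1⟩⟨1|ᴴ = 0 := by ext i j; fin_cases i <;> fin_cases j <;> simp [mul_apply]
  simp only [totalDissipator, Fin.sum_univ_three, twoQubitJumps, Matrix.cons_val_zero,
    Matrix.cons_val_one, Matrix.cons_val_two, Matrix.head_cons, Matrix.tail_cons]
  rw [hamTerm_kronecker_one, dissipator_kronecker_one, dissipator_kronecker_eq_zero hP hP',
    dissipator_kronecker_eq_zero hP hP', add_zero, add_zero, ← add_kronecker,
    hamTerm_add_dissipator_proj0, zero_kronecker]

end TwoQubit

/-- the two-qubit counterexample. The dissipator with jump operators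
`(σᶻ + 2σ⁻) ⊗ I`, `|1⟩⟨1| ⊗ σ⁻`, `|1⟩⟨1| ⊗ σ⁺` has kernel spanned by
`[[6,-2],[-2,1]] ⊗ I` and unique fixed density matrix `σ∞ = (1/14)·[[6,-2],[-2,1]] ⊗ I`,
but adding the Hamiltonian `σʸ ⊗ I` yields a Lindbladian annihilating all
`|0⟩⟨0| ⊗ M`, hence with more than one fixed density matrix, which does not generate
exponentially contractive dynamics. -/
theorem two_qubit_counterexample
    (L : Fin 3 → Matrix (Fin 2 × Fin 2) (Fin 2 × Fin 2) ℂ)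
    (hL : L = ![(!![1, 0; 0, -1] + (2 : ℂ) • !![0, 1; 0, 0]) ⊗ₖ
                  (1 : Matrix (Fin 2) (Fin 2) ℂ),
                !![0, 0; 0, 1] ⊗ₖ !![0, 1; 0, 0],
                !![0, 0; 0, 1] ⊗ₖ !![0, 0; 1, 0]]) :
    (∀ X : Matrix (Fin 2 × Fin 2) (Fin 2 × Fin 2) ℂ,
      totalDissipator L X = 0 ↔
        ∃ α : ℂ, X = α • ((!![6, -2; -2, 1] : Matrix (Fin 2) (Fin 2) ℂ) ⊗ₖ
          (1 : Matrix (Fin 2) (Fin 2) ℂ))) ∧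
    (IsDensity (((1 : ℂ)/14) • ((!![6, -2; -2, 1] : Matrix (Fin 2) (Fin 2) ℂ) ⊗ₖ
        (1 : Matrix (Fin 2) (Fin 2) ℂ))) ∧
      totalDissipator L (((1 : ℂ)/14) •
        ((!![6, -2; -2, 1] : Matrix (Fin 2) (Fin 2) ℂ) ⊗ₖ
          (1 : Matrix (Fin 2) (Fin 2) ℂ))) = 0 ∧
      ∀ σ : Matrix (Fin 2 × Fin 2) (Fin 2 × Fin 2) ℂ,
        IsDensity σ → totalDissipator L σ = 0 →
          σ = ((1 : ℂ)/14) • ((!![6, -2; -2, 1] : Matrix (Fin 2) (Fin 2) ℂ) ⊗ₖ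
            (1 : Matrix (Fin 2) (Fin 2) ℂ))) ∧
    (∀ M : Matrix (Fin 2) (Fin 2) ℂ,
      hamTerm ((!![0, -Complex.I; Complex.I, 0] : Matrix (Fin 2) (Fin 2) ℂ) ⊗ₖ
          (1 : Matrix (Fin 2) (Fin 2) ℂ))
        ((!![1, 0; 0, 0] : Matrix (Fin 2) (Fin 2) ℂ) ⊗ₖ M) +
        totalDissipator L ((!![1, 0; 0, 0] : Matrix (Fin 2) (Fin 2) ℂ) ⊗ₖ M) = 0) ∧
    (∃ σ₁ σ₂ : Matrix (Fin 2 × Fin 2) (Fin 2 × Fin 2) ℂ, σ₁ ≠ σ₂ ∧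
      IsDensity σ₁ ∧ IsDensity σ₂ ∧
      hamTerm ((!![0, -Complex.I; Complex.I, 0] : Matrix (Fin 2) (Fin 2) ℂ) ⊗ₖ
          (1 : Matrix (Fin 2) (Fin 2) ℂ)) σ₁ + totalDissipator L σ₁ = 0 ∧
      hamTerm ((!![0, -Complex.I; Complex.I, 0] : Matrix (Fin 2) (Fin 2) ℂ) ⊗ₖ
          (1 : Matrix (Fin 2) (Fin 2) ℂ)) σ₂ + totalDissipator L σ₂ = 0) ∧
    ¬ GeneratesExpContractive (fun x =>
        hamTerm ((!![0, -Complex.I; Complex.I, 0] : Matrix (Fin 2) (Fin 2) ℂ) ⊗ₖ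
          (1 : Matrix (Fin 2) (Fin 2) ℂ)) x + totalDissipator L x) := by
  subst hL
  have hσ₁ := isDensity_proj0.kronecker isDensity_proj0
  have hσ₂ := isDensity_proj0.kronecker isDensity_proj1
  have hne : (!![1, 0; 0, 0] : Matrix (Fin 2) (Fin 2) ℂ) ⊗ₖ
      (!![1, 0; 0, 0] : Matrix (Fin 2) (Fin 2) ℂ) ≠ !![1, 0; 0, 0] ⊗ₖ !![0, 0; 0, 1] := fun h => by
    simpa using congr_fun₂ h (0, 0) (0, 0)
  have hfix₁ := hamTerm_add_totalDissipator_proj0_kronecker !![1, 0; 0, 0]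
  have hfix₂ := hamTerm_add_totalDissipator_proj0_kronecker !![0, 0; 0, 1]
  refine ⟨totalDissipator_twoQubitJumps_eq_zero_iff,
    ⟨isDensity_stationaryState, (totalDissipator_twoQubitJumps_eq_zero_iff _).mpr ⟨_, rfl⟩,
      fun _ => eq_stationaryState_of_isDensity⟩,
    hamTerm_add_totalDissipator_proj0_kronecker, ⟨_, _, hne, hσ₁, hσ₂, hfix₁, hfix₂⟩,
    not_generatesExpContractive_of_fixed_densities hne hσ₁ hσ₂ hfix₁ hfix₂⟩

end Paper
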